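/- In the wristband-drink world model with causal counterfactual indicators I_{Y₀}, I_{Y₁} as above, the optimal policy for the reward R_a + R_d(Y₀, Y₁) = −I_p − I_i + I_d·I_{Y₀} − I_d·I_{Y₁} chooses a₀ = g iff o₀ = l_m (never i), and at step 1 gives a drink iff o₁ ∈ {w, w_p}. -/

import Mathlib

/- The wristband-drink world model of Armstrong's indifference paper.
`Omega` is the hidden randomness: maturity `mat` (prob 1/2), whether looks
match maturity `e` (prob 2/3), human ID check `idc` (prob 1/100), and a fair
coin `coin` used when the drink action is `i`. Everything else is a
deterministic function of `Omega` and the policy. -/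

namespace Wristband

inductive Act | g | ng | i
  deriving DecidableEq

instance : Fintype Act where
  elems := {Act.g, Act.ng, Act.i}
  complete := fun x => by cases x <;> simp

inductive O1 | w | wp | nw | nwp
  deriving DecidableEq

instance : Fintype O1 where
  elems := {O1.w, O1.wp, O1.nw, O1.nwp}
  complete := fun x => by cases x <;> simp

structure Omega where
  mat : Bool
  e : Bool
  idc : Bool
  coin : Bool
  deriving DecidableEq, Fintype

noncomputable def P (ω : Omega) : ℝ :=
  (1 / 2) * (if ω.e then 2 / 3 else 1 / 3) *
    (if ω.idc then 1 / 100 else 99 / 100) * (1 / 2)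

def obs0 (ω : Omega) : Bool := if ω.e then ω.mat else !ω.mat

def step1 (ω : Omega) : Act → O1
  | Act.i => if ω.mat then O1.w else O1.nw
  | Act.g => if ω.mat then O1.w else if ω.idc then O1.nwp else O1.w
  | Act.ng => if ω.mat then (if ω.idc then O1.wp else O1.nw) else O1.nw

def step2 (ω : Omega) : Act → Bool
  | Act.g => true
  | Act.ng => false
  | Act.i => ω.coin

structure Pol where
  act0 : Bool → Act
  act1 : Bool → Act → O1 → Act

structure Hist where
  o0 : Bool
  a0 : Act
  o1 : O1
  a1 : Act
  o2 : Bool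
  deriving DecidableEq, Fintype

def trace (ω : Omega) (π : Pol) : Hist :=
  let o0 := obs0 ω
  let a0 := π.act0 o0
  let o1 := step1 ω a0
  let a1 := π.act1 o0 a0 o1
  ⟨o0, a0, o1, a1, step2 ω a1⟩

/-- Expected reward from the start under policy `π`. -/
noncomputable def ER (R : Hist → ℝ) (π : Pol) : ℝ := ∑ ω, P ω * R (trace ω π)

def wrist : O1 → Bool
  | O1.w => true | O1.wp => true | _ => false

def pen : O1 → Bool
  | O1.wp => true | O1.nwp => true | _ => false

noncomputable def Ip (h : Hist) : ℝ := if pen h.o1 then 1 else 0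
noncomputable def Ii (h : Hist) : ℝ := if h.a0 = Act.i then 1 else 0
noncomputable def Iw (h : Hist) : ℝ := if wrist h.o1 then 1 else 0
noncomputable def Idr (h : Hist) : ℝ := if h.o2 then 1 else 0

/-- `R_a = -I_p - I_i`. -/
noncomputable def Ra (h : Hist) : ℝ := -Ip h - Ii h
/-- `R_d(X_w) = I_d (2 I_w - 1)`. -/
noncomputable def Rd (h : Hist) : ℝ := Idr h * (2 * Iw h - 1)

/-- Partial histories (prefixes): empty, after `o₀`, and after `o₀a₀o₁`. -/
inductive Pre
  | root
  | obs (o0 : Bool)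
  | mid (o0 : Bool) (a0 : Act) (o1 : O1)

def extendB (h : Hist) : Pre → Bool
  | Pre.root => true
  | Pre.obs o0 => decide (h.o0 = o0)
  | Pre.mid o0 a0 o1 => decide (h.o0 = o0 ∧ h.a0 = a0 ∧ h.o1 = o1)

/-- Probability of the partial history `p` under `π`. -/
noncomputable def den (p : Pre) (π : Pol) : ℝ :=
  ∑ ω, if extendB (trace ω π) p then P ω else 0

/-- Conditional expectation `E^π[I | p]` of an indicator/reward `I` given the
partial history `p`, under policy `π`. -/
noncomputable def cexp (I : Hist → ℝ) (p : Pre) (π : Pol) : ℝ :=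
  (∑ ω, if extendB (trace ω π) p then P ω * I (trace ω π) else 0) / den p π

/-- Posterior probability that the attendee is mature given `(o₀, a₀, o₁)`. -/
noncomputable def postM (o0 : Bool) (a0 : Act) (o1 : O1) : ℝ :=
  (∑ ω, if obs0 ω = o0 ∧ step1 ω a0 = o1 ∧ ω.mat then P ω else 0) /
  (∑ ω, if obs0 ω = o0 ∧ step1 ω a0 = o1 then P ω else 0)

/-- `I_{Y₀}`: posterior probability of mature AND human-ID-checked. -/
noncomputable def IY0m (o0 : Bool) (a0 : Act) (o1 : O1) : ℝ :=
  (∑ ω, if obs0 ω = o0 ∧ step1 ω a0 = o1 ∧ ω.mat ∧ ω.idc then P ω else 0) /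
  (∑ ω, if obs0 ω = o0 ∧ step1 ω a0 = o1 then P ω else 0)

/-- `I_{Y₁}`: posterior probability of immature AND human-ID-checked. -/
noncomputable def IY1m (o0 : Bool) (a0 : Act) (o1 : O1) : ℝ :=
  (∑ ω, if obs0 ω = o0 ∧ step1 ω a0 = o1 ∧ ω.mat = false ∧ ω.idc then P ω else 0) /
  (∑ ω, if obs0 ω = o0 ∧ step1 ω a0 = o1 then P ω else 0)

noncomputable def IY0 (h : Hist) : ℝ := IY0m h.o0 h.a0 h.o1
noncomputable def IY1 (h : Hist) : ℝ := IY1m h.o0 h.a0 h.o1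

/-- The policy that gives everyone a wristband, then a drink iff wristband. -/
def giveAll : Pol := ⟨fun _ => Act.g, fun _ _ o1 => if wrist o1 then Act.g else Act.ng⟩

/-- The policy that gives a wristband iff the attendee looks mature (`o₀ = l_m`),
then a drink iff wristband. -/
def lookPol : Pol :=
  ⟨fun o0 => if o0 then Act.g else Act.ng,
   fun _ _ o1 => if wrist o1 then Act.g else Act.ng⟩

/-
Since `I_d ∈ {0, 1}` and `I_{Y₀}, I_{Y₁} ≥ 0`, the drink term `I_d I_{Y₀} - I_d I_{Y₁}` is at most
`I_{Y₀}`. After an ID check the wristband shows the true maturity, so `I_{Y₁}` vanishes when a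
wristband was given and `I_{Y₀}` when none was: drinking iff wristband attains the bound. By the law
of total probability `E^π[I_{Y₀}] = P(mature ∧ ID-checked)` for every policy (unriggability), so
only `E^π[R_a]` depends on the choice of `a₀`, and `lookPol` maximises it.
-/

open Finset

theorem sum_mul_condProb {Ω κ : Type*} [Fintype Ω] [DecidableEq κ] (P : Ω → ℝ)
    (hP : ∀ ω, 0 ≤ P ω) (X : Ω → κ) (A : Ω → Prop) [DecidablePred A] :
    ∑ ω, P ω * ((∑ ω', if X ω' = X ω ∧ A ω' then P ω' else 0) /
        ∑ ω', if X ω' = X ω then P ω' else 0) =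
      ∑ ω, if A ω then P ω else 0 := by
  set N : κ → ℝ := fun k => ∑ ω', if X ω' = k ∧ A ω' then P ω' else 0
  set D : κ → ℝ := fun k => ∑ ω', if X ω' = k then P ω' else 0
  have hN_of_D : ∀ k, D k = 0 → N k = 0 := fun k hD => by
    refine le_antisymm (hD ▸ sum_le_sum fun ω _ => ?_) (sum_nonneg fun ω _ => ?_) <;>
      split_ifs <;> simp_all
  have hX : ∀ ω ∈ univ, X ω ∈ univ.image X := fun ω _ => mem_image_of_mem X (mem_univ ω)
  calc ∑ ω, P ω * (N (X ω) / D (X ω))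
      = ∑ k ∈ univ.image X, ∑ ω with X ω = k, P ω * (N k / D k) := by
        rw [← sum_fiberwise_of_maps_to hX]
        exact sum_congr rfl fun k _ => sum_congr rfl fun ω hω => by rw [(mem_filter.1 hω).2]
    _ = ∑ k ∈ univ.image X, N k := by
        refine sum_congr rfl fun k _ => ?_
        rw [← sum_mul, sum_filter]
        change D k * (N k / D k) = N k
        rcases eq_or_ne (D k) 0 with hD | hD
        · simp [hD, hN_of_D k hD]
        · exact mul_div_cancel₀ _ hD
    _ = ∑ ω, if A ω then P ω else 0 := by
        rw [sum_comm]
        simp [ite_and, sum_ite_eq, hX]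

def Omega.equivProd : Omega ≃ Bool × Bool × Bool × Bool where
  toFun ω := (ω.mat, ω.e, ω.idc, ω.coin)
  invFun p := ⟨p.1, p.2.1, p.2.2.1, p.2.2.2⟩
  left_inv _ := rfl
  right_inv _ := rfl

theorem Omega.sum_eq (f : Omega → ℝ) :
    ∑ ω, f ω = ∑ p : Bool × Bool × Bool × Bool, f ⟨p.1, p.2.1, p.2.2.1, p.2.2.2⟩ :=
  Fintype.sum_equiv Omega.equivProd _ _ fun _ => rfl

theorem P_nonneg (ω : Omega) : 0 ≤ P ω := by
  unfold P; split_ifs <;> norm_num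

theorem sum_ite_P_nonneg (p : Omega → Prop) [DecidablePred p] :
    0 ≤ ∑ ω, if p ω then P ω else 0 :=
  sum_nonneg fun ω _ => by split_ifs <;> simp [P_nonneg]

theorem IY0m_nonneg (o0 : Bool) (a0 : Act) (o1 : O1) : 0 ≤ IY0m o0 a0 o1 :=
  div_nonneg (sum_ite_P_nonneg _) (sum_ite_P_nonneg _)

theorem IY1m_nonneg (o0 : Bool) (a0 : Act) (o1 : O1) : 0 ≤ IY1m o0 a0 o1 :=
  div_nonneg (sum_ite_P_nonneg _) (sum_ite_P_nonneg _)

theorem wrist_step1_of_idc {ω : Omega} (hidc : ω.idc) (a : Act) :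
    wrist (step1 ω a) = ω.mat := by
  cases a <;> cases h : ω.mat <;> simp [step1, wrist, hidc, h]

theorem IY1m_eq_zero_of_wrist {o1 : O1} (hw : wrist o1) (o0 : Bool) (a0 : Act) :
    IY1m o0 a0 o1 = 0 := by
  refine div_eq_zero_iff.2 (Or.inl (sum_eq_zero fun ω _ => if_neg ?_))
  rintro ⟨-, rfl, hmat, hidc⟩
  simp [wrist_step1_of_idc hidc, hmat] at hw

theorem IY0m_eq_zero_of_not_wrist {o1 : O1} (hw : wrist o1 = false) (o0 : Bool) (a0 : Act) :
    IY0m o0 a0 o1 = 0 := by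
  refine div_eq_zero_iff.2 (Or.inl (sum_eq_zero fun ω _ => if_neg ?_))
  rintro ⟨-, rfl, hmat, hidc⟩
  simp [wrist_step1_of_idc hidc, hmat] at hw

theorem drink_sub_le_IY0 (h : Hist) : Idr h * IY0 h - Idr h * IY1 h ≤ IY0 h := by
  have := IY0m_nonneg h.o0 h.a0 h.o1
  have := IY1m_nonneg h.o0 h.a0 h.o1
  unfold Idr IY0 IY1
  split_ifs <;> linarith

theorem drink_sub_eq_IY0_of_o2_eq_wrist {h : Hist} (hd : h.o2 = wrist h.o1) :
    Idr h * IY0 h - Idr h * IY1 h = IY0 h := by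
  unfold Idr IY0 IY1
  rw [hd]
  cases hw : wrist h.o1
  · simp [IY0m_eq_zero_of_not_wrist hw]
  · simp [IY1m_eq_zero_of_wrist hw]

theorem trace_lookPol_o2 (ω : Omega) : (trace ω lookPol).o2 = wrist (trace ω lookPol).o1 := by
  unfold trace lookPol
  dsimp only
  cases wrist (step1 ω _) <;> rfl

theorem ER_mono {R R' : Hist → ℝ} (h : ∀ h, R h ≤ R' h) (π : Pol) : ER R π ≤ ER R' π :=
  sum_le_sum fun ω _ => mul_le_mul_of_nonneg_left (h _) (P_nonneg ω)

theorem ER_add (R R' : Hist → ℝ) (π : Pol) :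
    ER (fun h => R h + R' h) π = ER R π + ER R' π := by
  simp only [ER, mul_add, sum_add_distrib]

theorem ER_IY0 (π : Pol) : ER IY0 π = ∑ ω, if ω.mat ∧ ω.idc then P ω else 0 := by
  let X : Omega → Bool × Act × O1 := fun ω => ((trace ω π).o0, (trace ω π).a0, (trace ω π).o1)
  have hX : ∀ ω ω', X ω' = X ω ↔
      obs0 ω' = obs0 ω ∧ step1 ω' (π.act0 (obs0 ω)) = step1 ω (π.act0 (obs0 ω)) := by
    intro ω ω'
    simp only [X, trace, Prod.mk.injEq]
    constructor
    · rintro ⟨h0, -, h1⟩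
      exact ⟨h0, h0 ▸ h1⟩
    · rintro ⟨h0, h1⟩
      exact ⟨h0, h0 ▸ rfl, h0 ▸ h1⟩
  rw [← sum_mul_condProb P P_nonneg X]
  refine sum_congr rfl fun ω _ => ?_
  simp only [hX, and_assoc]
  rfl

/- `i` costs 1 for sure, while `g` (resp. `ng`) is penalised only for ID-checked immature (resp.
mature) attendees, and looks match maturity with probability 2/3. -/
theorem ER_Ra_le_lookPol (π : Pol) : ER Ra π ≤ ER Ra lookPol := by
  obtain ⟨act0, act1⟩ := π
  rcases h1 : act0 true <;> rcases h2 : act0 false <;>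
    · simp only [ER, Omega.sum_eq, Fintype.sum_prod_type, Fintype.sum_bool, trace, obs0, step1,
        Ra, Ip, Ii, P, pen, lookPol]
      simp [h1, h2] <;> norm_num

/-- The optimal policy for the causal-counterfactual reward
`R_a + R_d(Y₀,Y₁) = -I_p - I_i + I_d·I_{Y₀} - I_d·I_{Y₁}` chooses `a₀ = g` iff
`o₀ = l_m` (never `i`), and at step 1 gives a drink iff `o₁ ∈ {w, w_p}` —
that is, the policy `lookPol` is optimal for this reward. -/
theorem stmt12 :
    ∀ π : Pol,
      ER (fun h => Ra h + Idr h * IY0 h - Idr h * IY1 h) π ≤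
        ER (fun h => Ra h + Idr h * IY0 h - Idr h * IY1 h) lookPol := by
  intro π
  calc ER (fun h => Ra h + Idr h * IY0 h - Idr h * IY1 h) π
      ≤ ER (fun h => Ra h + IY0 h) π := ER_mono (fun h => by linarith [drink_sub_le_IY0 h]) π
    _ = ER Ra π + ER IY0 π := ER_add Ra IY0 π
    _ ≤ ER Ra lookPol + ER IY0 lookPol := by
        rw [ER_IY0, ER_IY0]; linarith [ER_Ra_le_lookPol π]
    _ = ER (fun h => Ra h + Idr h * IY0 h - Idr h * IY1 h) lookPol := by
        rw [← ER_add]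
        refine sum_congr rfl fun ω _ => ?_
        dsimp only
        rw [add_sub_assoc, drink_sub_eq_IY0_of_o2_eq_wrist (trace_lookPol_o2 ω)]

end Wristband
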